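/- arXiv:1607.01140 — 3 statements merged into one kernel-verified Lean document; each statement's English description precedes it below -/
import Mathlib

section
/- Let H = X⊗I₂⊗X + I₂⊗X⊗X, let |ψ⟩ = exp(−(iπ/4)·H)|011⟩, and let ρ = |ψ⟩⟨ψ| be the corresponding 8×8 projector. Then the reduced state of subsystem A, namely the 2×2 matrix Tr_{BC}ρ with entries (Tr_{BC}ρ)(a,a') = Σ_{b,c} ρ((a,b,c),(a',b,c)), equals (1/2)·I₂. (Hence this pure state is maximally entangled across the partition A:BC, witnessing that E_{A:BC} reaches its maximal value 1 at time τ = π/4.) -/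
/-!
STATEMENT 2: With `H = X⊗I₂⊗X + I₂⊗X⊗X`, `|ψ⟩ = exp(−(iπ/4)·H)|011⟩` and
`ρ = |ψ⟩⟨ψ|`, the reduced state of subsystem A satisfies `Tr_{BC} ρ = (1/2)·I₂`.
-/

open Matrix
open scoped Kronecker

noncomputable section

/-- The Pauli-x matrix. -/
def X : Matrix (Fin 2) (Fin 2) ℂ := !![0, 1; 1, 0]

/-- The 2×2 identity matrix. -/
def Id2 : Matrix (Fin 2) (Fin 2) ℂ := 1

/-- `H = X⊗I₂⊗X + I₂⊗X⊗X` (tensor factors ordered A, B, C). -/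
def HH : Matrix (Fin 2 × Fin 2 × Fin 2) (Fin 2 × Fin 2 × Fin 2) ℂ :=
  X ⊗ₖ (Id2 ⊗ₖ X) + Id2 ⊗ₖ (X ⊗ₖ X)

/-- Standard basis vector `|0⟩` of ℂ². -/
def ket0 : Fin 2 → ℂ := ![1, 0]

/-- Standard basis vector `|1⟩` of ℂ². -/
def ket1 : Fin 2 → ℂ := ![0, 1]

/-- `|abc⟩ = |a⟩⊗|b⟩⊗|c⟩ ∈ ℂ⁸` (Kronecker product of vectors). -/
def kron3 (u v w : Fin 2 → ℂ) : Fin 2 × Fin 2 × Fin 2 → ℂ :=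
  fun p => u p.1 * v p.2.1 * w p.2.2

/-- The outer product (projector) `|v⟩⟨v|`. -/
def outer {n : Type*} (v : n → ℂ) : Matrix n n ℂ := vecMulVec v (star v)

/-- Partial trace over subsystems B and C:
`(Tr_{BC} ρ)(a, a') = Σ_{b,c} ρ((a,b,c), (a',b,c))`. -/
def trBC (ρ : Matrix (Fin 2 × Fin 2 × Fin 2) (Fin 2 × Fin 2 × Fin 2) ℂ) :
    Matrix (Fin 2) (Fin 2) ℂ :=
  Matrix.of fun a a' => ∑ b : Fin 2, ∑ c : Fin 2, ρ (a, b, c) (a', b, c)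

/-!
`H = A + B` with `A = X⊗I₂⊗X` and `B = I₂⊗X⊗X` commuting involutions, so
`exp(-(iπ/4)H) = exp(-(iπ/4)A) exp(-(iπ/4)B) = ½(1 - iA)(1 - iB)`.
Applied to `|011⟩` this gives `ψ = ½(|011⟩ - i|000⟩ - i|110⟩ - |101⟩)`: the two branches `a = 0`
and `a = 1` carry orthogonal states of BC with equal weight `½`, so `Tr_{BC}|ψ⟩⟨ψ| = ½ I₂`.
-/

open NormedSpace Complex

section Involution

variable {A : Type*} [Ring A] [Algebra ℂ A] [TopologicalSpace A] [IsTopologicalRing A]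
  [ContinuousSMul ℂ A] [T2Space A]

theorem exp_smul_of_mul_self_eq_one {M : A} (hM : M * M = 1) (z : ℂ) :
    exp (z • M) = cosh z • (1 : A) + sinh z • M := by
  rw [exp_eq_tsum ℂ]
  refine HasSum.tsum_eq ?_
  have h_even (k : ℕ) : M ^ (2 * k) = 1 := by rw [pow_mul, sq, hM, one_pow]
  have h_odd (k : ℕ) : M ^ (2 * k + 1) = M := by rw [pow_succ, h_even, one_mul]
  refine HasSum.even_add_odd ?_ ?_
  · convert (hasSum_cosh z).smul_const (1 : A) using 2 with k
    rw [smul_pow, h_even, smul_smul, inv_mul_eq_div]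
  · convert (hasSum_sinh z).smul_const M using 2 with k
    rw [smul_pow, h_odd, smul_smul, inv_mul_eq_div]

theorem exp_neg_I_pi_div_four_smul_of_mul_self_eq_one {M : A} (hM : M * M = 1) :
    exp ((-(I * ((Real.pi : ℂ) / 4))) • M) = ((Real.sqrt 2 : ℂ) / 2) • (1 - I • M) := by
  have h_arg : -(I * ((Real.pi : ℂ) / 4)) = ((-(Real.pi / 4) : ℝ) : ℂ) * I := by
    push_cast; ring
  rw [exp_smul_of_mul_self_eq_one hM, h_arg, cosh_mul_I, sinh_mul_I, ← ofReal_cos, ← ofReal_sin,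
    Real.cos_neg, Real.sin_neg, Real.cos_pi_div_four, Real.sin_pi_div_four, smul_sub, smul_smul]
  push_cast
  module

end Involution

theorem Matrix.exp_neg_I_pi_div_four_smul_add {n : Type*} [Fintype n] [DecidableEq n]
    {M N : Matrix n n ℂ} (hM : M * M = 1) (hN : N * N = 1) (hMN : Commute M N) :
    exp ((-(I * ((Real.pi : ℂ) / 4))) • (M + N)) = (1 / 2 : ℂ) • ((1 - I • M) * (1 - I • N)) := by
  have h_sqrt : (Real.sqrt 2 : ℂ) / 2 * ((Real.sqrt 2 : ℂ) / 2) = 1 / 2 := by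
    rw [div_mul_div_comm, ← ofReal_mul, Real.mul_self_sqrt zero_le_two]; norm_num
  rw [smul_add, Matrix.exp_add_of_commute _ _ ((hMN.smul_left _).smul_right _),
    exp_neg_I_pi_div_four_smul_of_mul_self_eq_one hM,
    exp_neg_I_pi_div_four_smul_of_mul_self_eq_one hN, smul_mul_smul_comm, h_sqrt]

namespace Matrix

variable {m n α : Type*} [Fintype m] [Fintype n] [CommSemiring α]

theorem kronecker_mul_self_eq_one [DecidableEq m] [DecidableEq n] {A : Matrix m m α}
    {B : Matrix n n α} (hA : A * A = 1) (hB : B * B = 1) : A ⊗ₖ B * A ⊗ₖ B = 1 := by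
  rw [← mul_kronecker_mul, hA, hB, one_kronecker_one]

theorem _root_.Commute.kronecker {A A' : Matrix m m α} {B B' : Matrix n n α} (hA : Commute A A')
    (hB : Commute B B') : Commute (A ⊗ₖ B) (A' ⊗ₖ B') := by
  rw [Commute, SemiconjBy, ← mul_kronecker_mul, ← mul_kronecker_mul, hA.eq, hB.eq]

end Matrix

theorem X_mul_X : X * X = 1 := by
  ext i j
  fin_cases i <;> fin_cases j <;> simp [X, Matrix.mul_apply]

theorem X_mulVec_ket0 : X *ᵥ ket0 = ket1 := by
  ext i; fin_cases i <;> simp [X, ket0, ket1]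

theorem X_mulVec_ket1 : X *ᵥ ket1 = ket0 := by
  ext i; fin_cases i <;> simp [X, ket0, ket1]

theorem kronecker_mulVec_kron3 (P Q R : Matrix (Fin 2) (Fin 2) ℂ) (u v w : Fin 2 → ℂ) :
    P ⊗ₖ (Q ⊗ₖ R) *ᵥ kron3 u v w = kron3 (P *ᵥ u) (Q *ᵥ v) (R *ᵥ w) := by
  ext ⟨a, b, c⟩
  simp only [mulVec, dotProduct, kron3, kroneckerMap_apply, Fintype.sum_prod_type,
    Fin.sum_univ_two]
  ring

theorem exp_HH_mulVec_ket011 :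
    exp ((-(I * ((Real.pi : ℂ) / 4))) • HH) *ᵥ kron3 ket0 ket1 ket1 =
      (1 / 2 : ℂ) • (kron3 ket0 ket1 ket1 - I • kron3 ket0 ket0 ket0
        - I • kron3 ket1 ket1 ket0 - kron3 ket1 ket0 ket1) := by
  have hA : X ⊗ₖ (Id2 ⊗ₖ X) * X ⊗ₖ (Id2 ⊗ₖ X) = 1 :=
    kronecker_mul_self_eq_one X_mul_X (kronecker_mul_self_eq_one (mul_one 1) X_mul_X)
  have hB : Id2 ⊗ₖ (X ⊗ₖ X) * Id2 ⊗ₖ (X ⊗ₖ X) = 1 :=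
    kronecker_mul_self_eq_one (mul_one 1) (kronecker_mul_self_eq_one X_mul_X X_mul_X)
  have hAB : Commute (X ⊗ₖ (Id2 ⊗ₖ X)) (Id2 ⊗ₖ (X ⊗ₖ X)) :=
    (Commute.one_right X).kronecker ((Commute.one_left X).kronecker (Commute.refl X))
  rw [HH, exp_neg_I_pi_div_four_smul_add hA hB hAB, smul_mulVec, ← mulVec_mulVec,
    sub_mulVec, sub_mulVec, one_mulVec, one_mulVec, smul_mulVec, smul_mulVec,
    kronecker_mulVec_kron3, mulVec_sub, mulVec_smul, kronecker_mulVec_kron3,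
    kronecker_mulVec_kron3]
  simp only [Id2, one_mulVec, X_mulVec_ket0, X_mulVec_ket1, smul_sub, smul_smul, I_mul_I]
  module

theorem reduced_state_of_A_is_maximally_mixed :
    trBC (outer
        ((NormedSpace.exp ((-(Complex.I * ((Real.pi : ℂ) / 4))) • HH)).mulVec
          (kron3 ket0 ket1 ket1))) = (1 / 2 : ℂ) • Id2 := by
  rw [exp_HH_mulVec_ket011]
  ext a a'
  fin_cases a <;> fin_cases a' <;>
    norm_num [trBC, outer, vecMulVec, kron3, ket0, ket1, Fin.sum_univ_two, Id2,
      mul_mul_mul_comm _ I]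

end
end

section
/- Let K, D, V₀ be real n×n matrices, M(t) = exp(tK), and V(t) = M(t)·V₀·M(t)ᵀ + ∫₀ᵗ M(s)·D·M(s)ᵀ ds. Then for every real t the covariance matrix satisfies the explicit linear equation K·V(t) + V(t)·Kᵀ = −D + K·M(t)·V₀·M(t)ᵀ + M(t)·V₀·M(t)ᵀ·Kᵀ + M(t)·D·M(t)ᵀ. -/
/-!
With `F(s) = M(s) D M(s)ᵀ` we have `F' = K F + F Kᵀ`, because `M' = K M` and `(Mᵀ)' = Mᵀ Kᵀ`.
Integrating over `[0, t]` and pulling the constant factors out of the integral gives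
`K (∫₀ᵗ F) + (∫₀ᵗ F) Kᵀ = F(t) - F(0) = F(t) - D`; the term `M(t) V₀ M(t)ᵀ` of `V(t)` is
carried along unchanged.
-/

open Matrix

attribute [local instance] Matrix.normedAddCommGroup Matrix.normedSpace

noncomputable section

/-- `M(t) = exp(tK)`. -/
def M {n : ℕ} (K : Matrix (Fin n) (Fin n) ℝ) (t : ℝ) : Matrix (Fin n) (Fin n) ℝ :=
  NormedSpace.exp (t • K)

/-- Covariance matrix at time `t`: `V(t) = M(t)·V₀·M(t)ᵀ + ∫₀ᵗ M(s)·D·M(s)ᵀ ds`. -/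
def covMatrix {n : ℕ} (K D V₀ : Matrix (Fin n) (Fin n) ℝ) (t : ℝ) :
    Matrix (Fin n) (Fin n) ℝ :=
  M K t * V₀ * (M K t)ᵀ + ∫ s in (0:ℝ)..t, M K s * D * (M K s)ᵀ

namespace Matrix

variable {l m n : Type*} [Fintype m] [Fintype n]

/- The entrywise sup norm does not make square matrices a normed ring, but the `L∞` operator norm
does, and it induces the same topology; derivatives only depend on the topology. -/

theorem hasDerivAt_exp_smul_const' [DecidableEq m] {𝕂 : Type*} [RCLike 𝕂]
    (A : Matrix m m 𝕂) (t : 𝕂) :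
    HasDerivAt (fun u : 𝕂 => NormedSpace.exp (u • A)) (A * NormedSpace.exp (t • A)) t := by
  let := Matrix.linftyOpNormedRing (n := m) (α := 𝕂)
  let := Matrix.linftyOpNormedAlgebra (n := m) (R := 𝕂) (α := 𝕂)
  exact @_root_.hasDerivAt_exp_smul_const' _ _ _ _ _ (FiniteDimensional.complete 𝕂 _) A t

theorem hasDerivAt_exp_smul_const [DecidableEq m] {𝕂 : Type*} [RCLike 𝕂]
    (A : Matrix m m 𝕂) (t : 𝕂) :
    HasDerivAt (fun u : 𝕂 => NormedSpace.exp (u • A)) (NormedSpace.exp (t • A) * A) t := by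
  let := Matrix.linftyOpNormedRing (n := m) (α := 𝕂)
  let := Matrix.linftyOpNormedAlgebra (n := m) (R := 𝕂) (α := 𝕂)
  exact @_root_.hasDerivAt_exp_smul_const _ _ _ _ _ (FiniteDimensional.complete 𝕂 _) A t

theorem _root_.HasDerivAt.matrix_mul [DecidableEq m] {𝕜 : Type*} [NontriviallyNormedField 𝕜]
    {f g : 𝕜 → Matrix m m 𝕜} {f' g' : Matrix m m 𝕜} {x : 𝕜}
    (hf : HasDerivAt f f' x) (hg : HasDerivAt g g' x) :
    HasDerivAt (fun y => f y * g y) (f' * g x + f x * g') x := by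
  let := Matrix.linftyOpNormedRing (n := m) (α := 𝕜)
  let := Matrix.linftyOpNormedAlgebra (n := m) (R := 𝕜) (α := 𝕜)
  exact hf.mul hg

theorem hasDerivAt_exp_smul_mul_mul_exp_smul [DecidableEq m] {𝕂 : Type*} [RCLike 𝕂]
    (A D B : Matrix m m 𝕂) (t : 𝕂) :
    HasDerivAt (fun u : 𝕂 => NormedSpace.exp (u • A) * D * NormedSpace.exp (u • B))
      (A * (NormedSpace.exp (t • A) * D * NormedSpace.exp (t • B)) +
        NormedSpace.exp (t • A) * D * NormedSpace.exp (t • B) * B) t := by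
  convert ((hasDerivAt_exp_smul_const' A t).matrix_mul (hasDerivAt_const t D)).matrix_mul
    (hasDerivAt_exp_smul_const B t) using 1
  simp only [Matrix.mul_zero, add_zero, Matrix.mul_assoc]

theorem mul_intervalIntegral [Fintype l] {F : ℝ → Matrix m n ℝ} {a b : ℝ} (A : Matrix l m ℝ)
    (hF : Continuous F) :
    A * (∫ s in a..b, F s) = ∫ s in a..b, A * F s :=
  ((mulLeftLinearMap n ℝ A).toContinuousLinearMap.intervalIntegral_comp_comm
    (hF.intervalIntegrable a b)).symm

theorem intervalIntegral_mul [Fintype l] {F : ℝ → Matrix l m ℝ} {a b : ℝ} (B : Matrix m n ℝ)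
    (hF : Continuous F) :
    (∫ s in a..b, F s) * B = ∫ s in a..b, F s * B :=
  ((mulRightLinearMap l ℝ B).toContinuousLinearMap.intervalIntegral_comp_comm
    (hF.intervalIntegrable a b)).symm

theorem mul_intervalIntegral_add_intervalIntegral_mul {F : ℝ → Matrix m n ℝ}
    {A : Matrix m m ℝ} {B : Matrix n n ℝ} (a b : ℝ)
    (hF : ∀ s, HasDerivAt F (A * F s + F s * B) s) :
    A * (∫ s in a..b, F s) + (∫ s in a..b, F s) * B = F b - F a := by
  have hcont : Continuous F := continuous_iff_continuousAt.2 fun s => (hF s).continuousAt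
  have hAF : Continuous fun s => A * F s :=
    (mulLeftLinearMap n ℝ A).continuous_of_finiteDimensional.comp hcont
  have hFB : Continuous fun s => F s * B :=
    (mulRightLinearMap m ℝ B).continuous_of_finiteDimensional.comp hcont
  calc A * (∫ s in a..b, F s) + (∫ s in a..b, F s) * B
      = ∫ s in a..b, (A * F s + F s * B) := by
        rw [mul_intervalIntegral A hcont, intervalIntegral_mul B hcont]
        exact (intervalIntegral.integral_add (hAF.intervalIntegrable a b)
          (hFB.intervalIntegrable a b)).symm
    _ = F b - F a :=
        intervalIntegral.integral_eq_sub_of_hasDerivAt (fun s _ => hF s)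
          ((hAF.add hFB).intervalIntegrable a b)

end Matrix

theorem M_zero {n : ℕ} (K : Matrix (Fin n) (Fin n) ℝ) : M K 0 = 1 := by
  simp [M]

theorem M_transpose {n : ℕ} (K : Matrix (Fin n) (Fin n) ℝ) (s : ℝ) : (M K s)ᵀ = M Kᵀ s := by
  rw [M, M, ← transpose_smul, Matrix.exp_transpose]

theorem hasDerivAt_M_mul_mul_M_transpose {n : ℕ} (K D : Matrix (Fin n) (Fin n) ℝ) (s : ℝ) :
    HasDerivAt (fun s => M K s * D * (M K s)ᵀ)
      (K * (M K s * D * (M K s)ᵀ) + M K s * D * (M K s)ᵀ * Kᵀ) s := by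
  simp only [M_transpose]
  exact hasDerivAt_exp_smul_mul_mul_exp_smul K D Kᵀ s

theorem covariance_matrix_explicit_linear_equation {n : ℕ}
    (K D V₀ : Matrix (Fin n) (Fin n) ℝ) (t : ℝ) :
    K * covMatrix K D V₀ t + covMatrix K D V₀ t * Kᵀ =
      -D + K * M K t * V₀ * (M K t)ᵀ + M K t * V₀ * (M K t)ᵀ * Kᵀ +
        M K t * D * (M K t)ᵀ := by
  have hIntegral := Matrix.mul_intervalIntegral_add_intervalIntegral_mul 0 t
    (hasDerivAt_M_mul_mul_M_transpose K D)
  rw [M_zero, Matrix.one_mul, transpose_one, Matrix.mul_one] at hIntegral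
  simp only [covMatrix, Matrix.mul_add, Matrix.add_mul]
  rw [add_add_add_comm, hIntegral]
  noncomm_ring

end
end

section
/- Let K be a real n×n matrix all of whose complex eigenvalues (the roots of its characteristic polynomial over ℂ) have strictly negative real part. Then M(t) = exp(tK) tends to the zero matrix as t → ∞. -/
/-!
Split `ℂⁿ` into the generalized eigenspaces of the complexified matrix `A`. On the one for `μ`,
`A - μ` is nilpotent, so `exp (t A) x = e^{tμ} ∑_{j<k} t^j/j! (A - μ)^j x`, which tends to `0`
because `t^j e^{t Re μ} → 0` when `Re μ < 0`. The real parts of the entries of `exp (t A)` are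
the entries of `exp (t K)`.
-/

open Matrix NormedSpace Filter Topology Finset

open scoped Nat

lemma Complex.tendsto_ofReal_pow_mul_exp_mul_atTop_nhds_zero {μ : ℂ} (hμ : μ.re < 0) (j : ℕ) :
    Tendsto (fun t : ℝ => (t : ℂ) ^ j * Complex.exp (t * μ)) atTop (𝓝 0) := by
  rw [tendsto_zero_iff_norm_tendsto_zero]
  refine (tendsto_rpow_mul_exp_neg_mul_atTop_nhds_zero j (-μ.re) (by linarith)).congr' ?_
  filter_upwards [eventually_ge_atTop 0] with t ht
  rw [norm_mul, norm_pow, Complex.norm_exp, Complex.norm_real, Real.norm_of_nonneg ht,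
    Real.rpow_natCast, neg_neg, Complex.re_ofReal_mul, mul_comm μ.re]

namespace Matrix

variable {ι : Type*} [Fintype ι] [DecidableEq ι]

lemma map_exp {R S : Type*} [NormedRing R] [NormedAlgebra ℚ R] [CompleteSpace R]
    [NormedRing S] [NormedAlgebra ℚ S] (f : R →+* S) (hf : Continuous f) (A : Matrix ι ι R) :
    (exp A).map f = exp (A.map f) := by
  -- the operator norm induces the product uniformity, but not syntactically
  open scoped Norms.Operator in
  have : @CompleteSpace (Matrix ι ι R) PseudoMetricSpace.toUniformSpace :=
    (inferInstance : CompleteSpace (Matrix ι ι R))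
  open scoped Norms.Operator in
  exact NormedSpace.map_exp f.mapMatrix (continuous_id.matrix_map hf) A

lemma exp_mulVec_eq_sum_of_pow_mulVec_eq_zero {𝕜 : Type*} [RCLike 𝕜] (N : Matrix ι ι 𝕜)
    {x : ι → 𝕜} {k : ℕ} (hk : N ^ k *ᵥ x = 0) :
    exp N *ᵥ x = ∑ j ∈ range k, (j ! : 𝕜)⁻¹ • (N ^ j *ᵥ x) := by
  have hvanish : ∀ j ∉ range k, (j ! : 𝕜)⁻¹ • (N ^ j *ᵥ x) = 0 := fun j hj => by
    rw [← Nat.sub_add_cancel (not_lt.1 (mem_range.not.1 hj)), pow_add, ← mulVec_mulVec, hk,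
      mulVec_zero, smul_zero]
  have hseries : HasSum (fun j => (j ! : 𝕜)⁻¹ • N ^ j) (exp N) := by
    open scoped Norms.Operator in exact exp_series_hasSum_exp' N
  have hmapped : HasSum (fun j => ((j ! : 𝕜)⁻¹ • N ^ j) *ᵥ x) (exp N *ᵥ x) :=
    hseries.map (mulVec.addMonoidHomLeft x) (continuous_id.matrix_mulVec continuous_const)
  simp only [smul_mulVec] at hmapped
  exact hmapped.unique (hasSum_sum_of_ne_finset_zero hvanish)

lemma exp_eq_exp_smul_exp_sub (A : Matrix ι ι ℂ) (μ : ℂ) :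
    exp A = Complex.exp μ • exp (A - μ • 1) := by
  have hscalar : exp (algebraMap ℂ (Matrix ι ι ℂ) μ) = algebraMap ℂ _ (Complex.exp μ) := by
    rw [Complex.exp_eq_exp_ℂ]
    open scoped Norms.Operator in exact (algebraMap_exp_comm μ).symm
  calc exp A = exp (algebraMap ℂ _ μ + (A - μ • 1)) := by
        rw [Algebra.algebraMap_eq_smul_one, add_sub_cancel]
    _ = Complex.exp μ • exp (A - μ • 1) := by
        rw [exp_add_of_commute _ _ (Algebra.commute_algebraMap_left _ _), hscalar,
          ← Algebra.smul_def]

lemma exp_smul_mulVec_eq_sum (A : Matrix ι ι ℂ) (μ s : ℂ) {x : ι → ℂ} {k : ℕ}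
    (hk : (A - μ • 1) ^ k *ᵥ x = 0) :
    exp (s • A) *ᵥ x =
      ∑ j ∈ range k, ((j ! : ℂ)⁻¹ * (s ^ j * Complex.exp (s * μ))) • ((A - μ • 1) ^ j *ᵥ x) := by
  have hshift : s • A - (s * μ) • 1 = s • (A - μ • 1) := by
    rw [smul_sub, smul_smul]
  have hk' : (s • (A - μ • 1)) ^ k *ᵥ x = 0 := by rw [smul_pow, smul_mulVec, hk, smul_zero]
  rw [exp_eq_exp_smul_exp_sub _ (s * μ), hshift, smul_mulVec,
    exp_mulVec_eq_sum_of_pow_mulVec_eq_zero _ hk', smul_sum]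
  refine sum_congr rfl fun j _ => ?_
  rw [smul_pow, smul_mulVec, smul_smul, smul_smul]
  ring_nf

lemma tendsto_exp_smul_mulVec_of_pow_sub_mulVec_eq_zero (A : Matrix ι ι ℂ) {μ : ℂ}
    (hμ : μ.re < 0) {x : ι → ℂ} {k : ℕ} (hk : (A - μ • 1) ^ k *ᵥ x = 0) :
    Tendsto (fun t : ℝ => exp ((t : ℂ) • A) *ᵥ x) atTop (𝓝 0) := by
  simp only [exp_smul_mulVec_eq_sum A μ _ hk]
  rw [← sum_const_zero (s := range k)]
  refine tendsto_finsetSum _ fun j _ => ?_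
  simpa using ((Complex.tendsto_ofReal_pow_mul_exp_mul_atTop_nhds_zero hμ j).const_mul
    (j ! : ℂ)⁻¹).smul_const ((A - μ • 1) ^ j *ᵥ x)

lemma tendsto_exp_smul_mulVec (A : Matrix ι ι ℂ)
    (hA : ∀ μ, Module.End.HasEigenvalue A.toLin' μ → μ.re < 0) (v : ι → ℂ) :
    Tendsto (fun t : ℝ => exp ((t : ℂ) • A) *ᵥ v) atTop (𝓝 0) := by
  have hv : v ∈ ⨆ μ, Module.End.maxGenEigenspace A.toLin' μ := by
    rw [Module.End.iSup_maxGenEigenspace_eq_top]; trivial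
  induction hv using Submodule.iSup_induction' with
  | mem μ x hx =>
    rcases eq_or_ne x 0 with rfl | hx0
    · simp
    have hμ : Module.End.HasEigenvalue A.toLin' μ :=
      Module.End.HasUnifEigenvalue.lt (k := ⊤) zero_lt_one fun h =>
        hx0 (by rwa [Module.End.maxGenEigenspace, h, Submodule.mem_bot] at hx)
    obtain ⟨k, hk⟩ := (Module.End.mem_maxGenEigenspace _ _ _).1 hx
    refine tendsto_exp_smul_mulVec_of_pow_sub_mulVec_eq_zero A (hA μ hμ) (k := k) ?_
    have hsub : toLin' (A - μ • 1) = toLin' A - μ • 1 := by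
      rw [map_sub, map_smul, toLin'_one, Module.End.one_eq_id]
    rwa [← hsub, ← toLin'_pow, toLin'_apply] at hk
  | zero => simp
  | add x y _ _ hx hy => simpa [mulVec_add] using hx.add hy

lemma tendsto_exp_smul (A : Matrix ι ι ℂ)
    (hA : ∀ μ, Module.End.HasEigenvalue A.toLin' μ → μ.re < 0) :
    Tendsto (fun t : ℝ => exp ((t : ℂ) • A)) atTop (𝓝 0) :=
  tendsto_pi_nhds.2 fun i => tendsto_pi_nhds.2 fun j => by
    simpa [mulVec_single_one] using
      tendsto_pi_nhds.1 (tendsto_exp_smul_mulVec A hA (Pi.single j 1)) i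

end Matrix

attribute [local instance] Matrix.normedAddCommGroup Matrix.normedSpace

noncomputable section

theorem exp_tendsto_zero_of_eigenvalues_neg_re {n : ℕ} (K : Matrix (Fin n) (Fin n) ℝ)
    (hK : ∀ μ : ℂ, (Matrix.charpoly (K.map (fun x : ℝ => (x : ℂ)))).IsRoot μ → μ.re < 0) :
    Filter.Tendsto (fun t : ℝ => NormedSpace.exp (t • K)) Filter.atTop
      (nhds (0 : Matrix (Fin n) (Fin n) ℝ)) := by
  set A := K.map (fun x : ℝ => (x : ℂ))
  have hA : ∀ μ, Module.End.HasEigenvalue A.toLin' μ → μ.re < 0 := fun μ hμ =>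
    hK μ (by rwa [Module.End.hasEigenvalue_iff_isRoot_charpoly, charpoly_toLin'] at hμ)
  have hcomplexify (t : ℝ) : (exp (t • K)).map (↑) = exp ((t : ℂ) • A) := by
    refine (Matrix.map_exp Complex.ofRealHom Complex.continuous_ofReal (t • K)).trans ?_
    congr 1
    ext i j
    simp [A]
  have hre : Tendsto (fun t : ℝ => (exp ((t : ℂ) • A)).map Complex.re) atTop
      (𝓝 ((0 : Matrix (Fin n) (Fin n) ℂ).map Complex.re)) :=
    ((continuous_id.matrix_map Complex.continuous_re).tendsto 0).comp (tendsto_exp_smul A hA)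
  rw [Matrix.map_zero _ Complex.zero_re] at hre
  refine hre.congr fun t => ?_
  rw [← hcomplexify]
  ext i j
  simp

end
end
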